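/- Let $g$ be a dyadic distribution on $\mathbb{R}^2$ with finitely many non-zero Haar coefficients, all associated to dyadic rectangles contained in an open set $\Omega_0$ of finite measure. Suppose $\{\Omega_i\}_{i\ge 0}$ is a contracting family with $\Omega_{i+1} = \{S_d(g|\Omega_i) > 2^{\lambda_i}\}^\sim \cap \Omega_i$ for integers $\lambda_i$. Then the pieces $g_i := \sum_{R\subseteq\Omega_i,\ R\not\subseteq\Omega_{i+1}} g_R h_R$ satisfy $\int S_d(g_i)^2 \le 2\cdot 2^{2\lambda_i}|\Omega_i|$. -/

import Mathlib

/-!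
Expanding the square, `∫ S_d(c)² = ∑_R c_R²`. If `R ⊆ Ω_i` but `R ⊄ Ω_{i+1}`, then `R` contains
a point outside the enlargement of `U = {S_d(g|Ω_i) > 2^{λ_i}}`, so `|R ∩ U| ≤ |R|/2`, i.e.
`|R| ≤ 2 |R \ U|`. Hence the coefficients of the piece satisfy
`∑ g_R² ≤ 2 ∑_{R ⊆ Ω_i} g_R² |R \ U| / |R| = 2 ∫_{Uᶜ} S_d(g|Ω_i)²`, and on `Uᶜ` the integrand
is at most `2^{2λ_i}` and vanishes outside `Ω_i`.
-/

open MeasureTheory Set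
open scoped ENNReal NNReal

noncomputable section

/-- The dyadic interval `[2^k n, 2^k (n+1))`. -/
def dyadicInterval (k n : ℤ) : Set ℝ := Set.Ico ((2 : ℝ) ^ k * n) ((2 : ℝ) ^ k * (n + 1))

/-- Index for dyadic rectangles: scales and positions in each coordinate. -/
abbrev DyadicRect := (ℤ × ℤ) × ℤ × ℤ

/-- The dyadic rectangle in the plane indexed by `R`. -/
def dyadicRect (R : DyadicRect) : Set (ℝ × ℝ) :=
  (dyadicInterval R.1.1 R.1.2) ×ˢ (dyadicInterval R.2.1 R.2.2)

/-- The measure `|R|` of a dyadic rectangle, as an extended nonnegative real. -/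
def rectVol (R : DyadicRect) : ℝ≥0∞ := (2 : ℝ≥0∞) ^ R.1.1 * (2 : ℝ≥0∞) ^ R.2.1

/-- The bi-parameter dyadic square function of a family of Haar coefficients `c`:
`S_d(c)(x) = (∑_R c_R² χ_R(x)/|R|)^{1/2}`. -/
def Sd (c : DyadicRect → ℝ) (x : ℝ × ℝ) : ℝ≥0∞ :=
  (∑' R : DyadicRect,
      (dyadicRect R).indicator (fun _ => ENNReal.ofReal (c R ^ 2) / rectVol R) x) ^ (1 / 2 : ℝ)

/-- The average `⟨f⟩_R` of `f` over the dyadic rectangle `R`. -/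
def rectAvg (f : ℝ × ℝ → ℝ) (R : DyadicRect) : ℝ :=
  (∫ y in dyadicRect R, f y) / (rectVol R).toReal

/-- The bi-parameter dyadic maximal function `M_d(f)(x) = sup_{R ∋ x} |⟨f⟩_R|`. -/
def Md (f : ℝ × ℝ → ℝ) (x : ℝ × ℝ) : ℝ≥0∞ :=
  ⨆ R : DyadicRect, (dyadicRect R).indicator (fun _ => ENNReal.ofReal |rectAvg f R|) x

end

noncomputable section
open Classical in
/-- The localized bi-parameter dyadic square function
`S_d(g|Ω) = (∑_{R ⊆ Ω} g_R² χ_R/|R|)^{1/2}`. -/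
def SdLoc (c : DyadicRect → ℝ) (Ω : Set (ℝ × ℝ)) (x : ℝ × ℝ) : ℝ≥0∞ :=
  (∑' R : DyadicRect,
      if dyadicRect R ⊆ Ω then
        (dyadicRect R).indicator (fun _ => ENNReal.ofReal (c R ^ 2) / rectVol R) x
      else 0) ^ (1 / 2 : ℝ)

/-- An open axis-parallel rectangle in the plane. -/
def IsAxisRect (S : Set (ℝ × ℝ)) : Prop :=
  ∃ a b c d : ℝ, a < b ∧ c < d ∧ S = Set.Ioo a b ×ˢ Set.Ioo c d

/-- The strong maximal function of the indicator of `Ω`: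
`M(χ_Ω)(x) = sup_{x ∈ S} |S ∩ Ω| / |S|`, the supremum over axis-parallel rectangles. -/
def strongMaxInd (Ω : Set (ℝ × ℝ)) (x : ℝ × ℝ) : ℝ≥0∞ :=
  ⨆ (S : Set (ℝ × ℝ)) (_ : IsAxisRect S) (_ : x ∈ S), volume (S ∩ Ω) / volume S

/-- The standard enlargement `Ω̃ = {M(χ_Ω) > 1/2}` of an open set. -/
def enlarge (Ω : Set (ℝ × ℝ)) : Set (ℝ × ℝ) := {x | 1 / 2 < strongMaxInd Ω x}

end

open Filter Topology

lemma measurableSet_dyadicRect (R : DyadicRect) : MeasurableSet (dyadicRect R) :=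
  measurableSet_Ico.prod measurableSet_Ico

lemma ofReal_two_zpow (k : ℤ) : ENNReal.ofReal ((2 : ℝ) ^ k) = (2 : ℝ≥0∞) ^ k := by
  rw [← Real.rpow_intCast, ← ENNReal.ofReal_rpow_of_pos two_pos, ENNReal.rpow_intCast]
  norm_num

lemma volume_dyadicRect (R : DyadicRect) : volume (dyadicRect R) = rectVol R := by
  rw [dyadicRect, dyadicInterval, dyadicInterval, Measure.volume_eq_prod, Measure.prod_prod,
    Real.volume_Ico, Real.volume_Ico, mul_add_one, add_sub_cancel_left, mul_add_one,
    add_sub_cancel_left, ofReal_two_zpow, ofReal_two_zpow, rectVol]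

lemma rectVol_ne_zero (R : DyadicRect) : rectVol R ≠ 0 :=
  mul_ne_zero (ENNReal.zpow_pos two_ne_zero ENNReal.ofNat_ne_top _).ne'
    (ENNReal.zpow_pos two_ne_zero ENNReal.ofNat_ne_top _).ne'

lemma rectVol_ne_top (R : DyadicRect) : rectVol R ≠ ⊤ :=
  ENNReal.mul_ne_top (ENNReal.zpow_lt_top two_ne_zero ENNReal.ofNat_ne_top _).ne
    (ENNReal.zpow_lt_top two_ne_zero ENNReal.ofNat_ne_top _).ne

lemma Sd_rpow_two (c : DyadicRect → ℝ) (x : ℝ × ℝ) :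
    Sd c x ^ (2 : ℝ) = ∑' R : DyadicRect,
      (dyadicRect R).indicator (fun _ => ENNReal.ofReal (c R ^ 2) / rectVol R) x := by
  rw [Sd, ← ENNReal.rpow_mul]
  norm_num

lemma measurable_Sd (c : DyadicRect → ℝ) : Measurable (Sd c) :=
  (Measurable.tsum fun R =>
    measurable_const.indicator (measurableSet_dyadicRect R)).pow_const _

lemma setLIntegral_Sd_rpow_two (c : DyadicRect → ℝ) (E : Set (ℝ × ℝ)) :
    ∫⁻ x in E, Sd c x ^ (2 : ℝ) =
      ∑' R : DyadicRect, ENNReal.ofReal (c R ^ 2) / rectVol R * volume (dyadicRect R ∩ E) := by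
  simp_rw [Sd_rpow_two]
  rw [lintegral_tsum fun R =>
    (measurable_const.indicator (measurableSet_dyadicRect R)).aemeasurable]
  refine tsum_congr fun R => ?_
  rw [lintegral_indicator_const (measurableSet_dyadicRect R),
    Measure.restrict_apply (measurableSet_dyadicRect R)]

lemma lintegral_Sd_rpow_two (c : DyadicRect → ℝ) :
    ∫⁻ x, Sd c x ^ (2 : ℝ) = ∑' R : DyadicRect, ENNReal.ofReal (c R ^ 2) := by
  rw [← setLIntegral_univ, setLIntegral_Sd_rpow_two]
  refine tsum_congr fun R => ?_
  rw [inter_univ, volume_dyadicRect, ENNReal.div_mul_cancel (rectVol_ne_zero R) (rectVol_ne_top R)]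

open Classical in
lemma SdLoc_eq_Sd (c : DyadicRect → ℝ) (Ω : Set (ℝ × ℝ)) :
    SdLoc c Ω = Sd fun R => if dyadicRect R ⊆ Ω then c R else 0 := by
  ext x
  refine congrArg (· ^ (1 / 2 : ℝ)) (tsum_congr fun R => ?_)
  split_ifs <;> simp [*]

lemma SdLoc_eq_zero_of_notMem {c : DyadicRect → ℝ} {Ω : Set (ℝ × ℝ)} {x : ℝ × ℝ}
    (hx : x ∉ Ω) : SdLoc c Ω x = 0 := by
  rw [SdLoc, ENNReal.tsum_eq_zero.2 fun R => ?_, ENNReal.zero_rpow_of_pos (by norm_num)]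
  split_ifs with hR
  · exact indicator_of_notMem (fun hxR => hx (hR hxR)) _
  · rfl

lemma setLIntegral_SdLoc_sq_le (c : DyadicRect → ℝ) (Ω : Set (ℝ × ℝ)) (t : ℝ≥0∞) :
    ∫⁻ x in {x | t < SdLoc c Ω x}ᶜ, SdLoc c Ω x ^ (2 : ℝ) ≤ t ^ 2 * volume Ω := by
  have hU : MeasurableSet {x | t < SdLoc c Ω x} :=
    measurableSet_lt measurable_const (SdLoc_eq_Sd c Ω ▸ measurable_Sd _)
  have hle (x : ℝ × ℝ) :
      {x | t < SdLoc c Ω x}ᶜ.indicator (fun x => SdLoc c Ω x ^ (2 : ℝ)) x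
        ≤ Ω.indicator (fun _ => t ^ 2) x := by
    by_cases hxU : t < SdLoc c Ω x
    · simp [hxU]
    by_cases hxΩ : x ∈ Ω
    · simpa [hxU, hxΩ, ENNReal.rpow_two] using pow_le_pow_left₀ zero_le (not_lt.1 hxU) 2
    · simp [hxΩ, SdLoc_eq_zero_of_notMem hxΩ]
  rw [← lintegral_indicator hU.compl]
  exact (lintegral_mono hle).trans (lintegral_indicator_const_le _ _)

lemma volume_inter_le_half_of_notMem_enlarge {U S : Set (ℝ × ℝ)} {x : ℝ × ℝ}
    (hS : IsAxisRect S) (hxS : x ∈ S) (hxU : x ∉ enlarge U) :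
    volume (S ∩ U) ≤ volume S / 2 := by
  have hratio : volume (S ∩ U) / volume S ≤ strongMaxInd U x :=
    le_iSup₂_of_le S hS (le_iSup_of_le hxS le_rfl)
  replace hratio := hratio.trans (not_lt.1 hxU)
  rw [ENNReal.div_le_iff_le_mul (Or.inr (by simp)) (Or.inr (by simp))] at hratio
  rwa [ENNReal.div_eq_inv_mul, ← one_div]

lemma volume_Ico_prod_inter_le_half {U : Set (ℝ × ℝ)} {a b c d : ℝ} {x : ℝ × ℝ}
    (hx : x ∈ Ico a b ×ˢ Ico c d) (hxU : x ∉ enlarge U) :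
    volume ((Ico a b ×ˢ Ico c d) ∩ U) ≤ volume (Ico a b ×ˢ Ico c d) / 2 := by
  have hab : a < b := hx.1.1.trans_lt hx.1.2
  have hcd : c < d := hx.2.1.trans_lt hx.2.2
  set f : ℝ → ℝ≥0∞ := fun ε => ENNReal.ofReal ((b - a + ε) * (d - c + ε)) / 2
  -- `x` may lie on a lower edge, so compare with open rectangles enlarged by `ε` to the lower left.
  have hbound : ∀ ε > 0, volume ((Ico a b ×ˢ Ico c d) ∩ U) ≤ f ε := by
    intro ε hε
    have hsub : Ico a b ×ˢ Ico c d ⊆ Ioo (a - ε) b ×ˢ Ioo (c - ε) d :=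
      prod_mono (Ico_subset_Ioo_left (by linarith)) (Ico_subset_Ioo_left (by linarith))
    calc volume ((Ico a b ×ˢ Ico c d) ∩ U)
        ≤ volume ((Ioo (a - ε) b ×ˢ Ioo (c - ε) d) ∩ U) :=
          measure_mono (inter_subset_inter_left _ hsub)
      _ ≤ volume (Ioo (a - ε) b ×ˢ Ioo (c - ε) d) / 2 :=
          volume_inter_le_half_of_notMem_enlarge
            ⟨a - ε, b, c - ε, d, by linarith, by linarith, rfl⟩ (hsub hx) hxU
      _ = f ε := by
          rw [Measure.volume_eq_prod, Measure.prod_prod, Real.volume_Ioo, Real.volume_Ioo,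
            ← ENNReal.ofReal_mul (by linarith)]
          congr 2
          ring
  have hf : Tendsto f (𝓝[>] 0) (𝓝 (volume (Ico a b ×ˢ Ico c d) / 2)) := by
    have hf0 : volume (Ico a b ×ˢ Ico c d) / 2 = f 0 := by
      rw [Measure.volume_eq_prod, Measure.prod_prod, Real.volume_Ico, Real.volume_Ico,
        ← ENNReal.ofReal_mul (by linarith)]
      simp only [f, add_zero]
    rw [hf0]
    refine (ENNReal.Tendsto.div_const ?_ (Or.inr two_ne_zero)).mono_left nhdsWithin_le_nhds
    exact (ENNReal.continuous_ofReal.comp (by fun_prop)).tendsto 0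
  exact ge_of_tendsto hf (eventually_nhdsWithin_of_forall hbound)

lemma rectVol_le_two_mul_volume_inter_compl {U : Set (ℝ × ℝ)} {R : DyadicRect} {x : ℝ × ℝ}
    (hxR : x ∈ dyadicRect R) (hxU : x ∉ enlarge U) :
    rectVol R ≤ 2 * volume (dyadicRect R ∩ Uᶜ) := by
  have hhalf : volume (dyadicRect R ∩ U) ≤ rectVol R / 2 :=
    volume_dyadicRect R ▸ volume_Ico_prod_inter_le_half hxR hxU
  have hsplit : rectVol R / 2 + rectVol R / 2 ≤ rectVol R / 2 + volume (dyadicRect R ∩ Uᶜ) :=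
    calc rectVol R / 2 + rectVol R / 2 = volume (dyadicRect R) := by
          rw [ENNReal.add_halves, volume_dyadicRect]
      _ ≤ volume (dyadicRect R ∩ U) + volume (dyadicRect R \ U) :=
          measure_le_inter_add_sdiff _ _ _
      _ ≤ rectVol R / 2 + volume (dyadicRect R ∩ Uᶜ) := by rw [sdiff_eq]; gcongr
  have hcompl : rectVol R / 2 ≤ volume (dyadicRect R ∩ Uᶜ) :=
    ENNReal.le_of_add_le_add_left (ENNReal.div_ne_top (rectVol_ne_top R) two_ne_zero) hsplit
  calc rectVol R = 2 * (rectVol R / 2) :=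
        (ENNReal.mul_div_cancel two_ne_zero ENNReal.ofNat_ne_top).symm
    _ ≤ 2 * volume (dyadicRect R ∩ Uᶜ) := by gcongr

open Classical in
lemma ofReal_sq_stoppingPiece_le (c : DyadicRect → ℝ) (Ω U : Set (ℝ × ℝ)) (R : DyadicRect) :
    ENNReal.ofReal ((if dyadicRect R ⊆ Ω ∧ ¬dyadicRect R ⊆ enlarge U ∩ Ω then c R else 0) ^ 2)
      ≤ 2 * (ENNReal.ofReal ((if dyadicRect R ⊆ Ω then c R else 0) ^ 2) / rectVol R
        * volume (dyadicRect R ∩ Uᶜ)) := by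
  by_cases hR : dyadicRect R ⊆ Ω ∧ ¬dyadicRect R ⊆ enlarge U ∩ Ω
  · obtain ⟨x, hxR, hx⟩ := not_subset.1 hR.2
    have hxU : x ∉ enlarge U := fun hxU => hx ⟨hxU, hR.1 hxR⟩
    rw [if_pos hR, if_pos hR.1]
    calc ENNReal.ofReal (c R ^ 2) = ENNReal.ofReal (c R ^ 2) / rectVol R * rectVol R :=
          (ENNReal.div_mul_cancel (rectVol_ne_zero R) (rectVol_ne_top R)).symm
      _ ≤ ENNReal.ofReal (c R ^ 2) / rectVol R * (2 * volume (dyadicRect R ∩ Uᶜ)) := by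
          gcongr; exact rectVol_le_two_mul_volume_inter_compl hxR hxU
      _ = _ := by ring
  · rw [if_neg hR]
    simp

open Classical in
theorem stopping_pieces_L2_bound_general
    (g : DyadicRect → ℝ)
    (Ω : ℕ → Set (ℝ × ℝ)) (lam : ℕ → ℤ)
    (hrec : ∀ i, Ω (i + 1) = enlarge {x | (2 : ℝ≥0∞) ^ lam i < SdLoc g (Ω i) x} ∩ Ω i)
    (i : ℕ) :
    ∫⁻ x,
        Sd (fun R => if dyadicRect R ⊆ Ω i ∧ ¬dyadicRect R ⊆ Ω (i + 1) then g R else 0) x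
          ^ (2 : ℝ)
      ≤ 2 * (2 : ℝ≥0∞) ^ (2 * lam i) * volume (Ω i) := by
  set U := {x | (2 : ℝ≥0∞) ^ lam i < SdLoc g (Ω i) x}
  calc _ = ∑' R, ENNReal.ofReal
          ((if dyadicRect R ⊆ Ω i ∧ ¬dyadicRect R ⊆ Ω (i + 1) then g R else 0) ^ 2) :=
        lintegral_Sd_rpow_two _
    _ ≤ ∑' R, 2 * (ENNReal.ofReal ((if dyadicRect R ⊆ Ω i then g R else 0) ^ 2) / rectVol R
          * volume (dyadicRect R ∩ Uᶜ)) :=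
        ENNReal.tsum_le_tsum fun R => hrec i ▸ ofReal_sq_stoppingPiece_le g (Ω i) U R
    _ = 2 * ∫⁻ x in Uᶜ, SdLoc g (Ω i) x ^ (2 : ℝ) := by
        rw [ENNReal.tsum_mul_left, SdLoc_eq_Sd, setLIntegral_Sd_rpow_two]
    _ ≤ 2 * (((2 : ℝ≥0∞) ^ lam i) ^ 2 * volume (Ω i)) := by
        gcongr; exact setLIntegral_SdLoc_sq_le g (Ω i) _
    _ = 2 * (2 : ℝ≥0∞) ^ (2 * lam i) * volume (Ω i) := by
        rw [← mul_assoc, pow_two, ← ENNReal.zpow_add two_ne_zero ENNReal.ofNat_ne_top,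
          two_mul (lam i)]

open Classical in
/-- For `g` with finitely many non-zero Haar coefficients, all supported in
rectangles inside `Ω₀`, and the stopping sets `Ω_{i+1} = {S_d(g|Ω_i) > 2^{λ_i}}∼ ∩ Ω_i` forming
a contracting family, the pieces `g_i = ∑_{R ⊆ Ω_i, R ⊄ Ω_{i+1}} g_R h_R` satisfy
`∫ S_d(g_i)² ≤ 2 · 2^{2λ_i} |Ω_i|`. -/
theorem stopping_pieces_L2_bound (Ω₀ : Set (ℝ × ℝ)) (hopen : IsOpen Ω₀)
    (hfin : volume Ω₀ < ⊤)
    (g : DyadicRect → ℝ) (hfs : (Function.support g).Finite)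
    (hsupp : ∀ R, g R ≠ 0 → dyadicRect R ⊆ Ω₀)
    (Ω : ℕ → Set (ℝ × ℝ)) (lam : ℕ → ℤ)
    (hΩ₀ : Ω 0 = Ω₀)
    (hrec : ∀ i, Ω (i + 1) = enlarge {x | (2 : ℝ≥0∞) ^ lam i < SdLoc g (Ω i) x} ∩ Ω i)
    (hhalf : ∀ i, volume (Ω (i + 1)) ≤ volume (Ω i) / 2)
    (i : ℕ) :
    ∫⁻ x,
        Sd (fun R => if dyadicRect R ⊆ Ω i ∧ ¬dyadicRect R ⊆ Ω (i + 1) then g R else 0) x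
          ^ (2 : ℝ)
      ≤ 2 * (2 : ℝ≥0∞) ^ (2 * lam i) * volume (Ω i) :=
  stopping_pieces_L2_bound_general g Ω lam hrec i
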